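/- Let T > 0 and c₁ > 0. Suppose h₁, h₂ : ℝ × ℝ → ℝ are infinitely differentiable functions, 2π-periodic in their second (spatial) variable θ, with hᵢ(t, θ) ≥ c₁ for all (t, θ) ∈ [0, T] × ℝ and i = 1, 2, and suppose both satisfy the thin-film equation ∂ₜh(t,θ) + ∂_θ(h(t,θ)²/2) + ∂_θ(h(t,θ)³·(∂_θh(t,θ) + ∂_θ³h(t,θ))) = 0 for all (t, θ) ∈ [0, T] × ℝ. If h₁(0, θ) = h₂(0, θ) for all θ, then h₁(t, θ) = h₂(t, θ) for all (t, θ) ∈ [0, T] × ℝ. -/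

import Mathlib

open Real Function

noncomputable def Dth (H : ℝ → ℝ → ℝ) : ℝ → ℝ → ℝ := fun t θ => deriv (H t) θ
noncomputable def Dtt (H : ℝ → ℝ → ℝ) : ℝ → ℝ → ℝ := fun t θ => deriv (fun s => H s θ) t

lemma hasDerivAt_slice2 (H : ℝ → ℝ → ℝ) (hH : ContDiff ℝ (⊤ : ℕ∞) (uncurry H)) (t θ : ℝ) :
    HasDerivAt (H t) ((fderiv ℝ (uncurry H) (t, θ)) (0, 1)) θ := by
  have hf : HasFDerivAt (uncurry H) (fderiv ℝ (uncurry H) (t, θ)) (t, θ) :=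
    (hH.differentiable (by simp) (t, θ)).hasFDerivAt
  have hc : HasDerivAt (fun θ : ℝ => ((t, θ) : ℝ × ℝ)) (0, 1) θ :=
    (hasDerivAt_const θ t).prodMk (hasDerivAt_id θ)
  exact hf.comp_hasDerivAt θ hc

lemma hasDerivAt_slice1 (H : ℝ → ℝ → ℝ) (hH : ContDiff ℝ (⊤ : ℕ∞) (uncurry H)) (t θ : ℝ) :
    HasDerivAt (fun s => H s θ) ((fderiv ℝ (uncurry H) (t, θ)) (1, 0)) t := by
  have hf : HasFDerivAt (uncurry H) (fderiv ℝ (uncurry H) (t, θ)) (t, θ) :=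
    (hH.differentiable (by simp) (t, θ)).hasFDerivAt
  have hc : HasDerivAt (fun s : ℝ => ((s, θ) : ℝ × ℝ)) (1, 0) t :=
    (hasDerivAt_id t).prodMk (hasDerivAt_const t θ)
  exact hf.comp_hasDerivAt t hc

lemma contDiff_Dth {H : ℝ → ℝ → ℝ} (hH : ContDiff ℝ (⊤ : ℕ∞) (uncurry H)) :
    ContDiff ℝ (⊤ : ℕ∞) (uncurry (Dth H)) := by
  have : uncurry (Dth H) = fun p : ℝ × ℝ => (fderiv ℝ (uncurry H) p) (0, 1) := by
    funext p
    exact (hasDerivAt_slice2 H hH p.1 p.2).deriv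
  rw [this]
  exact (hH.fderiv_right (by simp)).clm_apply contDiff_const

lemma contDiff_Dtt {H : ℝ → ℝ → ℝ} (hH : ContDiff ℝ (⊤ : ℕ∞) (uncurry H)) :
    ContDiff ℝ (⊤ : ℕ∞) (uncurry (Dtt H)) := by
  have : uncurry (Dtt H) = fun p : ℝ × ℝ => (fderiv ℝ (uncurry H) p) (1, 0) := by
    funext p
    exact (hasDerivAt_slice1 H hH p.1 p.2).deriv
  rw [this]
  exact (hH.fderiv_right (by simp)).clm_apply contDiff_const

lemma contDiff_slice2 {H : ℝ → ℝ → ℝ} (hH : ContDiff ℝ (⊤ : ℕ∞) (uncurry H)) (t : ℝ) :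
    ContDiff ℝ (⊤ : ℕ∞) (H t) := hH.comp (contDiff_const.prodMk contDiff_id)

lemma hasDerivAt_Dth {H : ℝ → ℝ → ℝ} (hH : ContDiff ℝ (⊤ : ℕ∞) (uncurry H)) (t θ : ℝ) :
    HasDerivAt (H t) (Dth H t θ) θ :=
  (((contDiff_slice2 hH t).differentiable (by simp)) θ).hasDerivAt

lemma Function.Periodic.deriv_periodic {f : ℝ → ℝ} {c : ℝ} (h : Periodic f c) :
    Periodic (deriv f) c := by
  intro x
  rw [← deriv_comp_add_const]
  congr 1
  funext y
  exact h y

lemma exists_bound_periodic (G : ℝ → ℝ → ℝ) (hG : Continuous (uncurry G))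
    (hper : ∀ t, Periodic (G t) (2 * π)) (T : ℝ) :
    ∃ M : ℝ, 0 < M ∧ ∀ t ∈ Set.Icc (0:ℝ) T, ∀ θ : ℝ, |G t θ| ≤ M := by
  obtain ⟨C, hC⟩ := ((isCompact_Icc (a := (0:ℝ)) (b := T)).prod
    (isCompact_Icc (a := (0:ℝ)) (b := 2 * π))).exists_bound_of_continuousOn
    hG.continuousOn
  refine ⟨max C 1, lt_of_lt_of_le one_pos (le_max_right _ _), fun t ht θ => ?_⟩
  have hb := toIocMod_mem_Ioc Real.two_pi_pos 0 θ
  have he : G t (toIocMod Real.two_pi_pos 0 θ) = G t θ := by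
    have h2 := self_sub_toIocMod Real.two_pi_pos 0 θ
    have : toIocMod Real.two_pi_pos 0 θ = θ - toIocDiv Real.two_pi_pos 0 θ • (2 * π) := by
      linarith [h2]
    rw [this]
    exact (hper t).sub_zsmul_eq _
  rw [← he]
  refine le_trans ?_ (le_max_left C 1)
  have := hC (t, toIocMod Real.two_pi_pos 0 θ)
    ⟨ht, Set.mem_Icc.2 ⟨le_of_lt hb.1, by simpa using hb.2⟩⟩
  simpa [Real.norm_eq_abs] using this

open MeasureTheory intervalIntegral in
lemma zero_of_integral_sq_periodic (f : ℝ → ℝ) (hf : Continuous f)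
    (hp : Periodic f (2 * π))
    (h0 : ∫ θ in (0:ℝ)..(2 * π), f θ ^ 2 = 0) : ∀ θ, f θ = 0 := by
  have h2 : (0:ℝ) ≤ 2 * π := le_of_lt Real.two_pi_pos
  rw [intervalIntegral.integral_of_le h2] at h0
  have hint : IntegrableOn (fun θ => f θ ^ 2) (Set.Ioc 0 (2 * π)) volume :=
    (hf.pow 2).integrableOn_Ioc
  have hae : (fun θ => f θ ^ 2) =ᵐ[volume.restrict (Set.Ioc 0 (2 * π))] 0 :=
    (integral_eq_zero_iff_of_nonneg (fun θ => sq_nonneg (f θ)) hint).1 h0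
  have heqon : Set.EqOn (fun θ => f θ ^ 2) 0 (Set.Ioc 0 (2 * π)) :=
    MeasureTheory.Measure.eqOn_Ioc_of_ae_eq volume hae
      ((hf.pow 2).continuousOn) continuousOn_const
  intro θ
  have hb := toIocMod_mem_Ioc Real.two_pi_pos 0 θ
  have he : f (toIocMod Real.two_pi_pos 0 θ) = f θ := by
    have h2' := self_sub_toIocMod Real.two_pi_pos 0 θ
    have : toIocMod Real.two_pi_pos 0 θ = θ - toIocDiv Real.two_pi_pos 0 θ • (2 * π) := by
      linarith [h2']
    rw [this]; exact hp.sub_zsmul_eq _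
  have := heqon (Set.mem_Ioc.2 ⟨hb.1, by simpa using hb.2⟩)
  simp only [Pi.zero_apply, pow_eq_zero_iff] at this
  rw [← he]
  exact pow_eq_zero_iff (n := 2) (by norm_num) |>.1 (by simpa using this)

lemma continuous_slice2 {G : ℝ → ℝ → ℝ} (hG : Continuous (uncurry G)) (t : ℝ) :
    Continuous (G t) := hG.comp (continuous_const.prodMk continuous_id)

open MeasureTheory intervalIntegral in
lemma hasDerivAt_param_integral (F F' : ℝ → ℝ → ℝ) (b : ℝ)
    (hF : Continuous (uncurry F)) (hF' : Continuous (uncurry F'))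
    (hd : ∀ x θ, HasDerivAt (fun s => F s θ) (F' x θ) x) (x₀ : ℝ) :
    HasDerivAt (fun x => ∫ θ in (0:ℝ)..b, F x θ) (∫ θ in (0:ℝ)..b, F' x₀ θ) x₀ := by
  obtain ⟨C, hC⟩ := ((isCompact_Icc (a := x₀ - 1) (b := x₀ + 1)).prod
    (isCompact_uIcc (a := (0:ℝ)) (b := b))).exists_bound_of_continuousOn hF'.continuousOn
  have key := intervalIntegral.hasDerivAt_integral_of_dominated_loc_of_deriv_le
    (F := F) (F' := F') (x₀ := x₀) (a := (0:ℝ)) (b := b) (bound := fun _ => C)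
    (μ := volume) (s := Metric.ball x₀ 1) (Metric.ball_mem_nhds x₀ one_pos)
    (Filter.Eventually.of_forall fun x =>
      ((continuous_slice2 hF x).aestronglyMeasurable))
    ((continuous_slice2 hF x₀).intervalIntegrable _ _)
    ((continuous_slice2 hF' x₀).aestronglyMeasurable)
    (Filter.Eventually.of_forall fun θ hθ x hx => by
      have hxm : x ∈ Set.Icc (x₀ - 1) (x₀ + 1) := by
        have := Metric.mem_ball.1 hx
        rw [Real.dist_eq] at this
        constructor <;> [linarith [abs_lt.1 this |>.1]; linarith [abs_lt.1 this |>.2]]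
      have := hC (x, θ) ⟨hxm, Set.Ioc_subset_Icc_self hθ⟩
      simpa using this)
    (intervalIntegrable_const)
    (Filter.Eventually.of_forall fun θ _ x _ => hd x θ)
  exact key.2

lemma contDiff_slice1 {H : ℝ → ℝ → ℝ} (hH : ContDiff ℝ (⊤ : ℕ∞) (uncurry H)) (θ : ℝ) :
    ContDiff ℝ (⊤ : ℕ∞) (fun s => H s θ) := hH.comp (contDiff_id.prodMk contDiff_const)

lemma hasDerivAt_Dtt {H : ℝ → ℝ → ℝ} (hH : ContDiff ℝ (⊤ : ℕ∞) (uncurry H)) (t θ : ℝ) :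
    HasDerivAt (fun s => H s θ) (Dtt H t θ) t :=
  (((contDiff_slice1 hH θ).differentiable (by simp)) t).hasDerivAt

open intervalIntegral in
lemma ibp_periodic (U V U' V' : ℝ → ℝ)
    (hU : ∀ x, HasDerivAt U (U' x) x) (hV : ∀ x, HasDerivAt V (V' x) x)
    (hU' : Continuous U') (hV' : Continuous V')
    (hb : U (2 * π) * V (2 * π) = U 0 * V 0) :
    ∫ x in (0:ℝ)..2 * π, U x * V' x = - ∫ x in (0:ℝ)..2 * π, U' x * V x := by
  rw [integral_mul_deriv_eq_deriv_mul (fun x _ => hU x) (fun x _ => hV x)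
    (hU'.intervalIntegrable _ _) (hV'.intervalIntegrable _ _), hb]
  ring

set_option maxHeartbeats 1000000 in
/-- Uniqueness of smooth, spatially 2π-periodic, uniformly positive solutions
    of the thin-film Taylor–Couette equation
    h_t + ∂_θ(h²/2) + ∂_θ(h³(∂_θh + ∂_θ³h)) = 0 on [0, T]. -/
theorem stmt_12 (T c₁ : ℝ) (hT : 0 < T) (hc₁ : 0 < c₁)
    (h₁ h₂ : ℝ → ℝ → ℝ)
    (hsm₁ : ContDiff ℝ (⊤ : ℕ∞) (Function.uncurry h₁))
    (hsm₂ : ContDiff ℝ (⊤ : ℕ∞) (Function.uncurry h₂))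
    (hper₁ : ∀ t θ, h₁ t (θ + 2 * π) = h₁ t θ)
    (hper₂ : ∀ t θ, h₂ t (θ + 2 * π) = h₂ t θ)
    (hlb₁ : ∀ t ∈ Set.Icc (0:ℝ) T, ∀ θ : ℝ, c₁ ≤ h₁ t θ)
    (hlb₂ : ∀ t ∈ Set.Icc (0:ℝ) T, ∀ θ : ℝ, c₁ ≤ h₂ t θ)
    (heq₁ : ∀ t ∈ Set.Icc (0:ℝ) T, ∀ θ : ℝ,
      deriv (fun s => h₁ s θ) t
        + deriv (fun φ => (h₁ t φ) ^ 2 / 2) θ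
        + deriv (fun φ => (h₁ t φ) ^ 3 *
            (deriv (h₁ t) φ + iteratedDeriv 3 (h₁ t) φ)) θ = 0)
    (heq₂ : ∀ t ∈ Set.Icc (0:ℝ) T, ∀ θ : ℝ,
      deriv (fun s => h₂ s θ) t
        + deriv (fun φ => (h₂ t φ) ^ 2 / 2) θ
        + deriv (fun φ => (h₂ t φ) ^ 3 *
            (deriv (h₂ t) φ + iteratedDeriv 3 (h₂ t) φ)) θ = 0)
    (hinit : ∀ θ : ℝ, h₁ 0 θ = h₂ 0 θ) :
    ∀ t ∈ Set.Icc (0:ℝ) T, ∀ θ : ℝ, h₁ t θ = h₂ t θ := by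
  -- spatial partial derivatives
  set P11 := Dth h₁ with hP11
  set P12 := Dth (Dth h₁) with hP12
  set P13 := Dth (Dth (Dth h₁)) with hP13
  set P21 := Dth h₂ with hP21
  set P22 := Dth (Dth h₂) with hP22
  set P23 := Dth (Dth (Dth h₂)) with hP23
  set Q1 := Dtt h₁ with hQ1
  set Q2 := Dtt h₂ with hQ2
  have s11 : ContDiff ℝ (⊤ : ℕ∞) (uncurry P11) := contDiff_Dth hsm₁
  have s12 : ContDiff ℝ (⊤ : ℕ∞) (uncurry P12) := contDiff_Dth s11
  have s13 : ContDiff ℝ (⊤ : ℕ∞) (uncurry P13) := contDiff_Dth s12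
  have s21 : ContDiff ℝ (⊤ : ℕ∞) (uncurry P21) := contDiff_Dth hsm₂
  have s22 : ContDiff ℝ (⊤ : ℕ∞) (uncurry P22) := contDiff_Dth s21
  have s23 : ContDiff ℝ (⊤ : ℕ∞) (uncurry P23) := contDiff_Dth s22
  have sq1 : ContDiff ℝ (⊤ : ℕ∞) (uncurry Q1) := contDiff_Dtt hsm₁
  have sq2 : ContDiff ℝ (⊤ : ℕ∞) (uncurry Q2) := contDiff_Dtt hsm₂
  -- periodicity
  have per1 : ∀ t, Periodic (h₁ t) (2 * π) := fun t θ => hper₁ t θ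
  have per2 : ∀ t, Periodic (h₂ t) (2 * π) := fun t θ => hper₂ t θ
  have per11 : ∀ t, Periodic (P11 t) (2 * π) := fun t => (per1 t).deriv_periodic
  have per12 : ∀ t, Periodic (P12 t) (2 * π) := fun t => (per11 t).deriv_periodic
  have per13 : ∀ t, Periodic (P13 t) (2 * π) := fun t => (per12 t).deriv_periodic
  have per21 : ∀ t, Periodic (P21 t) (2 * π) := fun t => (per2 t).deriv_periodic
  have per22 : ∀ t, Periodic (P22 t) (2 * π) := fun t => (per21 t).deriv_periodic
  have per23 : ∀ t, Periodic (P23 t) (2 * π) := fun t => (per22 t).deriv_periodic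
  -- flux function
  set Ψ : ℝ → ℝ → ℝ := fun t φ =>
      ((h₁ t φ) ^ 2 / 2 + (h₁ t φ) ^ 3 * (P11 t φ + P13 t φ))
      - ((h₂ t φ) ^ 2 / 2 + (h₂ t φ) ^ 3 * (P21 t φ + P23 t φ)) with hΨ
  have sΨ : ContDiff ℝ (⊤ : ℕ∞) (uncurry Ψ) :=
    ((((hsm₁.pow 2).div_const 2).add ((hsm₁.pow 3).mul (s11.add s13)))).sub
      ((((hsm₂.pow 2).div_const 2).add ((hsm₂.pow 3).mul (s21.add s23))))
  have perΨ : ∀ t, Periodic (Ψ t) (2 * π) := by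
    intro t θ
    simp only [hΨ, per1 t θ, per2 t θ, per11 t θ, per13 t θ, per21 t θ, per23 t θ]
  -- iterated derivative reduction
  have hiter3 : ∀ f : ℝ → ℝ, iteratedDeriv 3 f = deriv (deriv (deriv f)) := by
    intro f
    rw [show (3 : ℕ) = 2 + 1 from rfl, iteratedDeriv_succ,
      show (2 : ℕ) = 1 + 1 from rfl, iteratedDeriv_succ, iteratedDeriv_one]
  -- differentiability of flux pieces (as functions of θ)
  have cA1 : ∀ t, ContDiff ℝ (⊤ : ℕ∞) (fun φ => (h₁ t φ) ^ 2 / 2) :=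
    fun t => ((contDiff_slice2 hsm₁ t).pow 2).div_const 2
  have cB1 : ∀ t, ContDiff ℝ (⊤ : ℕ∞) (fun φ => (h₁ t φ) ^ 3 * (P11 t φ + P13 t φ)) :=
    fun t => ((contDiff_slice2 hsm₁ t).pow 3).mul
      ((contDiff_slice2 s11 t).add (contDiff_slice2 s13 t))
  have cA2 : ∀ t, ContDiff ℝ (⊤ : ℕ∞) (fun φ => (h₂ t φ) ^ 2 / 2) :=
    fun t => ((contDiff_slice2 hsm₂ t).pow 2).div_const 2
  have cB2 : ∀ t, ContDiff ℝ (⊤ : ℕ∞) (fun φ => (h₂ t φ) ^ 3 * (P21 t φ + P23 t φ)) :=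
    fun t => ((contDiff_slice2 hsm₂ t).pow 3).mul
      ((contDiff_slice2 s21 t).add (contDiff_slice2 s23 t))
  -- derivative of the flux splits
  have hsplit : ∀ t θ, deriv (Ψ t) θ =
      (deriv (fun φ => (h₁ t φ) ^ 2 / 2) θ
        + deriv (fun φ => (h₁ t φ) ^ 3 * (P11 t φ + P13 t φ)) θ)
      - (deriv (fun φ => (h₂ t φ) ^ 2 / 2) θ
        + deriv (fun φ => (h₂ t φ) ^ 3 * (P21 t φ + P23 t φ)) θ) := by
    intro t θ
    have dA1 := ((cA1 t).differentiable (by simp)).differentiableAt (x := θ)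
    have dB1 := ((cB1 t).differentiable (by simp)).differentiableAt (x := θ)
    have dA2 := ((cA2 t).differentiable (by simp)).differentiableAt (x := θ)
    have dB2 := ((cB2 t).differentiable (by simp)).differentiableAt (x := θ)
    rw [hΨ]
    rw [deriv_fun_sub
      (f := fun φ => h₁ t φ ^ 2 / 2 + h₁ t φ ^ 3 * (P11 t φ + P13 t φ))
      (g := fun φ => h₂ t φ ^ 2 / 2 + h₂ t φ ^ 3 * (P21 t φ + P23 t φ))
      (dA1.add dB1) (dA2.add dB2),
      deriv_fun_add dA1 dB1, deriv_fun_add dA2 dB2]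
  -- the PDE in flux form
  have hkey : ∀ t ∈ Set.Icc (0:ℝ) T, ∀ θ : ℝ,
      Q1 t θ - Q2 t θ = -(deriv (Ψ t) θ) := by
    intro t ht θ
    have l1 : (fun φ => (h₁ t φ) ^ 3 * (deriv (h₁ t) φ + iteratedDeriv 3 (h₁ t) φ))
        = fun φ => (h₁ t φ) ^ 3 * (P11 t φ + P13 t φ) := by
      funext φ
      rw [hiter3 (h₁ t), hP11, hP13]
      rfl
    have l2 : (fun φ => (h₂ t φ) ^ 3 * (deriv (h₂ t) φ + iteratedDeriv 3 (h₂ t) φ))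
        = fun φ => (h₂ t φ) ^ 3 * (P21 t φ + P23 t φ) := by
      funext φ
      rw [hiter3 (h₂ t), hP21, hP23]
      rfl
    have e1 := heq₁ t ht θ
    have e2 := heq₂ t ht θ
    rw [l1] at e1
    rw [l2] at e2
    have q1 : Q1 t θ = deriv (fun s => h₁ s θ) t := by rw [hQ1]; rfl
    have q2 : Q2 t θ = deriv (fun s => h₂ s θ) t := by rw [hQ2]; rfl
    rw [hsplit t θ, q1, q2]
    linarith [e1, e2]
  -- coefficient functions and bounds
  set AA : ℝ → ℝ → ℝ := fun t θ => (h₁ t θ + h₂ t θ) / 2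
      + ((h₁ t θ) ^ 2 + h₁ t θ * h₂ t θ + (h₂ t θ) ^ 2) * (P11 t θ + P13 t θ) with hAA
  set BB : ℝ → ℝ → ℝ := fun t θ => (h₂ t θ) ^ 3 with hBB
  set CC : ℝ → ℝ → ℝ := fun t θ => 3 * (h₂ t θ) ^ 2 * P21 t θ with hCC
  have cAA : Continuous (uncurry AA) :=
    (((hsm₁.add hsm₂).div_const 2).add
      ((((hsm₁.pow 2).add (hsm₁.mul hsm₂)).add (hsm₂.pow 2)).mul (s11.add s13))).continuous
  have cBB : Continuous (uncurry BB) := (hsm₂.pow 3).continuous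
  have cCC : Continuous (uncurry CC) :=
    ((contDiff_const.mul (hsm₂.pow 2)).mul s21).continuous
  have perAA : ∀ t, Periodic (AA t) (2 * π) := by
    intro t θ
    simp only [hAA, per1 t θ, per2 t θ, per11 t θ, per13 t θ]
  have perBB : ∀ t, Periodic (BB t) (2 * π) := by
    intro t θ
    simp only [hBB, per2 t θ]
  have perCC : ∀ t, Periodic (CC t) (2 * π) := by
    intro t θ
    simp only [hCC, per2 t θ, per21 t θ]
  obtain ⟨M₁, hM₁pos, hM₁⟩ := exists_bound_periodic AA cAA perAA T
  obtain ⟨M₂, hM₂pos, hM₂⟩ := exists_bound_periodic BB cBB perBB T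
  obtain ⟨M₃, hM₃pos, hM₃⟩ := exists_bound_periodic CC cCC perCC T
  set M := max (max M₁ M₂) M₃ with hM
  have hMpos : 0 < M := lt_of_lt_of_le hM₃pos (le_max_right _ _)
  have hAbd : ∀ t ∈ Set.Icc (0:ℝ) T, ∀ θ, |AA t θ| ≤ M :=
    fun t ht θ => (hM₁ t ht θ).trans ((le_max_left _ _).trans (le_max_left _ _))
  have hBbd : ∀ t ∈ Set.Icc (0:ℝ) T, ∀ θ, |BB t θ| ≤ M :=
    fun t ht θ => (hM₂ t ht θ).trans ((le_max_right _ _).trans (le_max_left _ _))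
  have hCbd : ∀ t ∈ Set.Icc (0:ℝ) T, ∀ θ, |CC t θ| ≤ M :=
    fun t ht θ => (hM₃ t ht θ).trans (le_max_right _ _)
  set c := c₁ ^ 3 with hc
  have hcpos : 0 < c := pow_pos hc₁ 3
  have hBlb : ∀ t ∈ Set.Icc (0:ℝ) T, ∀ θ, c ≤ BB t θ := by
    intro t ht θ
    rw [hc, hBB]
    exact pow_le_pow_left₀ hc₁.le (hlb₂ t ht θ) 3
  set B := 3 * M + M ^ 2 / c with hB
  have hBpos : 0 < B := by positivity
  set K := M + B ^ 2 / (2 * c) with hK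
  -- the energy and its derivative
  set E : ℝ → ℝ := fun t => ∫ θ in (0:ℝ)..2 * π, (h₁ t θ - h₂ t θ) ^ 2 with hE
  set E' : ℝ → ℝ := fun t =>
    ∫ θ in (0:ℝ)..2 * π, 2 * (h₁ t θ - h₂ t θ) * (Q1 t θ - Q2 t θ) with hE'
  have hEderiv : ∀ t, HasDerivAt E (E' t) t := by
    intro t
    have := hasDerivAt_param_integral (fun x θ => (h₁ x θ - h₂ x θ) ^ 2)
      (fun x θ => 2 * (h₁ x θ - h₂ x θ) * (Q1 x θ - Q2 x θ)) (2 * π)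
      (((hsm₁.sub hsm₂).pow 2).continuous)
      ((continuous_const.mul ((hsm₁.sub hsm₂).continuous)).mul ((sq1.sub sq2).continuous))
      (fun x θ => by
        have hd := ((hasDerivAt_Dtt hsm₁ x θ).sub (hasDerivAt_Dtt hsm₂ x θ)).pow 2
        refine hd.congr_deriv ?_
        simp only [Pi.sub_apply, hQ1, hQ2]
        push_cast
        ring) t
    rw [hE, hE']
    exact this
  -- the key differential inequality
  have hEbound : ∀ t ∈ Set.Icc (0:ℝ) T, E' t ≤ K * E t := by
    intro t ht
    -- continuity of spatial slices
    have cH1 : Continuous (h₁ t) := continuous_slice2 hsm₁.continuous t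
    have cH2 : Continuous (h₂ t) := continuous_slice2 hsm₂.continuous t
    have cp11 : Continuous (P11 t) := continuous_slice2 s11.continuous t
    have cp12 : Continuous (P12 t) := continuous_slice2 s12.continuous t
    have cp13 : Continuous (P13 t) := continuous_slice2 s13.continuous t
    have cp21 : Continuous (P21 t) := continuous_slice2 s21.continuous t
    have cp22 : Continuous (P22 t) := continuous_slice2 s22.continuous t
    have cp23 : Continuous (P23 t) := continuous_slice2 s23.continuous t
    have cΨ : Continuous (Ψ t) := continuous_slice2 sΨ.continuous t
    have cΨ' : Continuous (fun θ => deriv (Ψ t) θ) :=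
      continuous_slice2 (contDiff_Dth sΨ).continuous t
    have caa : Continuous (AA t) := continuous_slice2 cAA t
    have cbb : Continuous (BB t) := continuous_slice2 cBB t
    have ccc : Continuous (CC t) := continuous_slice2 cCC t
    -- derivative facts in θ
    have dU0 : ∀ θ, HasDerivAt (fun φ => h₁ t φ - h₂ t φ)
        (P11 t θ - P21 t θ) θ :=
      fun θ => (hasDerivAt_Dth hsm₁ t θ).sub (hasDerivAt_Dth hsm₂ t θ)
    have dU1 : ∀ θ, HasDerivAt (fun φ => P11 t φ - P21 t φ)
        (P12 t θ - P22 t θ) θ :=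
      fun θ => (hasDerivAt_Dth s11 t θ).sub (hasDerivAt_Dth s21 t θ)
    have dU2 : ∀ θ, HasDerivAt (fun φ => P12 t φ - P22 t φ)
        (P13 t θ - P23 t θ) θ :=
      fun θ => (hasDerivAt_Dth s12 t θ).sub (hasDerivAt_Dth s22 t θ)
    have dΨ : ∀ θ, HasDerivAt (Ψ t) (deriv (Ψ t) θ) θ :=
      fun θ => (((contDiff_slice2 sΨ t).differentiable (by simp)) θ).hasDerivAt
    -- boundary value helper
    have pv : ∀ {f : ℝ → ℝ}, Periodic f (2 * π) → f (2 * π) = f 0 := by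
      intro f hf
      simpa using hf 0
    have perU0 : Periodic (fun φ => h₁ t φ - h₂ t φ) (2 * π) := (per1 t).sub (per2 t)
    have perU1 : Periodic (fun φ => P11 t φ - P21 t φ) (2 * π) := (per11 t).sub (per21 t)
    have perU2 : Periodic (fun φ => P12 t φ - P22 t φ) (2 * π) := (per12 t).sub (per22 t)
    -- Step 1: E' t as an integral against the flux derivative
    have step1 : E' t = ∫ θ in (0:ℝ)..2 * π,
        (-2) * ((h₁ t θ - h₂ t θ) * deriv (Ψ t) θ) := by
      rw [hE']
      apply intervalIntegral.integral_congr
      intro θ _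
      have := hkey t ht θ
      simp only []
      rw [this]
      ring
    -- Step 2: first integration by parts
    have step2 : (∫ θ in (0:ℝ)..2 * π, (h₁ t θ - h₂ t θ) * deriv (Ψ t) θ)
        = - ∫ θ in (0:ℝ)..2 * π, (P11 t θ - P21 t θ) * Ψ t θ := by
      apply ibp_periodic _ _ _ _ dU0 dΨ (cp11.sub cp21) cΨ'
      rw [pv perU0, pv (perΨ t)]
    -- Step 3: second integration by parts
    have step3 : (∫ θ in (0:ℝ)..2 * π, (BB t θ * (P11 t θ - P21 t θ)) * (P13 t θ - P23 t θ))
        = - ∫ θ in (0:ℝ)..2 * π,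
            (CC t θ * (P11 t θ - P21 t θ) + BB t θ * (P12 t θ - P22 t θ))
              * (P12 t θ - P22 t θ) := by
      refine ibp_periodic _ _ _ _ ?hu dU2
        ((ccc.mul (cp11.sub cp21)).add (cbb.mul (cp12.sub cp22)))
        (cp13.sub cp23) ?hb
      case hu =>
        intro θ
        simp only [hBB, hCC]
        have hd := ((hasDerivAt_Dth hsm₂ t θ).pow 3).mul (dU1 θ)
        refine hd.congr_deriv ?_
        simp only [Pi.pow_apply, hP21]
        push_cast
        ring
      case hb =>
        rw [pv (perBB t), pv (per11 t), pv (per21 t), pv (per12 t), pv (per22 t)]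
    -- Step 4: interpolation integration by parts
    have step4 : (∫ θ in (0:ℝ)..2 * π, (h₁ t θ - h₂ t θ) * (P12 t θ - P22 t θ))
        = - ∫ θ in (0:ℝ)..2 * π, (P11 t θ - P21 t θ) * (P11 t θ - P21 t θ) := by
      apply ibp_periodic _ _ _ _ dU0 dU1 (cp11.sub cp21) (cp12.sub cp22)
      rw [pv perU0, pv perU1]
    have h2pi : (0:ℝ) ≤ 2 * π := Real.two_pi_pos.le
    -- integrability facts
    have intf1 : IntervalIntegrable (fun θ =>
        (P11 t θ - P21 t θ) * (AA t θ * (h₁ t θ - h₂ t θ))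
          + BB t θ * (P11 t θ - P21 t θ) ^ 2) MeasureTheory.volume 0 (2 * π) :=
      (((cp11.sub cp21).mul (caa.mul (cH1.sub cH2))).add
        (cbb.mul ((cp11.sub cp21).pow 2))).intervalIntegrable _ _
    have intf2 : IntervalIntegrable (fun θ =>
        (BB t θ * (P11 t θ - P21 t θ)) * (P13 t θ - P23 t θ)) MeasureTheory.volume 0 (2 * π) :=
      ((cbb.mul (cp11.sub cp21)).mul (cp13.sub cp23)).intervalIntegrable _ _
    have intf3 : IntervalIntegrable (fun θ =>
        (CC t θ * (P11 t θ - P21 t θ) + BB t θ * (P12 t θ - P22 t θ))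
          * (P12 t θ - P22 t θ)) MeasureTheory.volume 0 (2 * π) :=
      (((ccc.mul (cp11.sub cp21)).add (cbb.mul (cp12.sub cp22))).mul
        (cp12.sub cp22)).intervalIntegrable _ _
    -- named integrals
    set I0 := ∫ θ in (0:ℝ)..2 * π, (h₁ t θ - h₂ t θ) ^ 2 with hI0
    set I1 := ∫ θ in (0:ℝ)..2 * π, (P11 t θ - P21 t θ) ^ 2 with hI1
    set I2 := ∫ θ in (0:ℝ)..2 * π, (P12 t θ - P22 t θ) ^ 2 with hI2
    have hI0nn : 0 ≤ I0 := by
      rw [hI0]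
      exact intervalIntegral.integral_nonneg h2pi (fun u _ => sq_nonneg _)
    have hI2nn : 0 ≤ I2 := by
      rw [hI2]
      exact intervalIntegral.integral_nonneg h2pi (fun u _ => sq_nonneg _)
    -- E' t as a single integral
    have e2 : E' t = ∫ θ in (0:ℝ)..2 * π,
        2 * (((P11 t θ - P21 t θ) * (AA t θ * (h₁ t θ - h₂ t θ))
              + BB t θ * (P11 t θ - P21 t θ) ^ 2)
          - (CC t θ * (P11 t θ - P21 t θ) + BB t θ * (P12 t θ - P22 t θ))
              * (P12 t θ - P22 t θ)) := by
      have hpt : ∀ θ : ℝ, (P11 t θ - P21 t θ) * Ψ t θ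
          = ((P11 t θ - P21 t θ) * (AA t θ * (h₁ t θ - h₂ t θ))
              + BB t θ * (P11 t θ - P21 t θ) ^ 2)
            + (BB t θ * (P11 t θ - P21 t θ)) * (P13 t θ - P23 t θ) := by
        intro θ
        simp only [hΨ, hAA, hBB]
        ring
      have e2a : (∫ θ in (0:ℝ)..2 * π, (P11 t θ - P21 t θ) * Ψ t θ)
          = (∫ θ in (0:ℝ)..2 * π,
              (P11 t θ - P21 t θ) * (AA t θ * (h₁ t θ - h₂ t θ))
                + BB t θ * (P11 t θ - P21 t θ) ^ 2)
            + ∫ θ in (0:ℝ)..2 * π,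
              (BB t θ * (P11 t θ - P21 t θ)) * (P13 t θ - P23 t θ) := by
        rw [← intervalIntegral.integral_add intf1 intf2]
        apply intervalIntegral.integral_congr
        intro θ _
        exact hpt θ
      rw [step1, intervalIntegral.integral_const_mul, step2, e2a, step3,
        intervalIntegral.integral_const_mul, intervalIntegral.integral_sub intf1 intf3]
      ring
    -- auxiliary constants
    set N := M ^ 2 / c with hN
    have hNc : c * N = M ^ 2 := by
      rw [hN]
      field_simp
    have hBN : B = 3 * M + N := by rw [hB, hN]
    set L := B ^ 2 / (2 * c) with hL
    have hKL : K = M + L := by rw [hK, hL]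
    -- pointwise bound of the integrand
    have hpoint : ∀ θ ∈ Set.Icc (0:ℝ) (2 * π),
        2 * (((P11 t θ - P21 t θ) * (AA t θ * (h₁ t θ - h₂ t θ))
              + BB t θ * (P11 t θ - P21 t θ) ^ 2)
          - (CC t θ * (P11 t θ - P21 t θ) + BB t θ * (P12 t θ - P22 t θ))
              * (P12 t θ - P22 t θ))
          ≤ M * (h₁ t θ - h₂ t θ) ^ 2 + B * (P11 t θ - P21 t θ) ^ 2
            - c * (P12 t θ - P22 t θ) ^ 2 := by
      intro θ _
      obtain ⟨hA1, hA2⟩ := abs_le.1 (hAbd t ht θ)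
      obtain ⟨hB1, hB2⟩ := abs_le.1 (hBbd t ht θ)
      obtain ⟨hC1, hC2⟩ := abs_le.1 (hCbd t ht θ)
      have hBl := hBlb t ht θ
      set x := h₁ t θ - h₂ t θ with hx
      set y := P11 t θ - P21 t θ with hy
      set z := P12 t θ - P22 t θ with hz
      set a := AA t θ
      set b := BB t θ
      set w := CC t θ
      rw [hBN]
      have k1 : 2 * a * x * y ≤ M * x ^ 2 + M * y ^ 2 := by
        rcases le_or_gt 0 (x * y) with hxy | hxy
        · nlinarith only [hMpos.le, hxy, sq_nonneg (x - y), mul_nonneg hxy (sub_nonneg.2 hA2),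
            mul_nonneg hMpos.le (sq_nonneg (x - y))]
        · nlinarith only [hMpos.le, sq_nonneg (x + y),
            mul_nonneg (le_of_lt (neg_pos.2 hxy)) (sub_nonneg.2 (neg_le.1 hA1)),
            mul_nonneg hMpos.le (sq_nonneg (x + y))]
      have k2 : 2 * b * y ^ 2 ≤ 2 * M * y ^ 2 := by
        nlinarith only [hB2, sq_nonneg y]
      have k3 : -(2 * w * y * z) ≤ N * y ^ 2 + c * z ^ 2 := by
        rw [show N * y ^ 2 + c * z ^ 2 = (c * N * y ^ 2 + c ^ 2 * z ^ 2) / c by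
          field_simp, hNc]
        rw [le_div_iff₀ hcpos]
        rcases le_or_gt 0 (y * z) with hyz | hyz
        · nlinarith only [sq_nonneg (M * y - c * z),
            mul_nonneg (mul_nonneg hcpos.le hyz) (by linarith only [hC1] : (0:ℝ) ≤ w + M)]
        · nlinarith only [sq_nonneg (M * y + c * z),
            mul_nonneg (mul_nonneg hcpos.le (le_of_lt (neg_pos.2 hyz)))
              (by linarith only [hC2] : (0:ℝ) ≤ M - w)]
      have k4 : -(2 * b * z ^ 2) ≤ -(2 * c * z ^ 2) := by
        nlinarith only [hBl, sq_nonneg z]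
      linarith only [k1, k2, k3, k4]
    -- first integral bound
    have bound1 : E' t ≤ M * I0 + B * I1 - c * I2 := by
      rw [e2]
      have intg : IntervalIntegrable (fun θ =>
          M * (h₁ t θ - h₂ t θ) ^ 2 + B * (P11 t θ - P21 t θ) ^ 2
            - c * (P12 t θ - P22 t θ) ^ 2) MeasureTheory.volume 0 (2 * π) :=
        (((continuous_const.mul ((cH1.sub cH2).pow 2)).add
          (continuous_const.mul ((cp11.sub cp21).pow 2))).sub
          (continuous_const.mul ((cp12.sub cp22).pow 2))).intervalIntegrable _ _
      have intG : IntervalIntegrable (fun θ =>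
          2 * (((P11 t θ - P21 t θ) * (AA t θ * (h₁ t θ - h₂ t θ))
              + BB t θ * (P11 t θ - P21 t θ) ^ 2)
          - (CC t θ * (P11 t θ - P21 t θ) + BB t θ * (P12 t θ - P22 t θ))
              * (P12 t θ - P22 t θ))) MeasureTheory.volume 0 (2 * π) :=
        (continuous_const.mul ((((cp11.sub cp21).mul (caa.mul (cH1.sub cH2))).add
          (cbb.mul ((cp11.sub cp21).pow 2))).sub
          (((ccc.mul (cp11.sub cp21)).add (cbb.mul (cp12.sub cp22))).mul
            (cp12.sub cp22)))).intervalIntegrable _ _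
      calc (∫ θ in (0:ℝ)..2 * π,
          2 * (((P11 t θ - P21 t θ) * (AA t θ * (h₁ t θ - h₂ t θ))
              + BB t θ * (P11 t θ - P21 t θ) ^ 2)
          - (CC t θ * (P11 t θ - P21 t θ) + BB t θ * (P12 t θ - P22 t θ))
              * (P12 t θ - P22 t θ)))
          ≤ ∫ θ in (0:ℝ)..2 * π,
            (M * (h₁ t θ - h₂ t θ) ^ 2 + B * (P11 t θ - P21 t θ) ^ 2
              - c * (P12 t θ - P22 t θ) ^ 2) :=
          intervalIntegral.integral_mono_on h2pi intG intg hpoint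
        _ = M * I0 + B * I1 - c * I2 := by
          rw [intervalIntegral.integral_sub
              (f := fun θ => M * (h₁ t θ - h₂ t θ) ^ 2 + B * (P11 t θ - P21 t θ) ^ 2)
              (g := fun θ => c * (P12 t θ - P22 t θ) ^ 2)
              (((continuous_const.mul ((cH1.sub cH2).pow 2)).add
                (continuous_const.mul ((cp11.sub cp21).pow 2))).intervalIntegrable _ _)
              ((continuous_const.mul ((cp12.sub cp22).pow 2)).intervalIntegrable _ _),
            intervalIntegral.integral_add
              (f := fun θ => M * (h₁ t θ - h₂ t θ) ^ 2) (g := fun θ => B * (P11 t θ - P21 t θ) ^ 2)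
              ((continuous_const.mul ((cH1.sub cH2).pow 2)).intervalIntegrable _ _)
              ((continuous_const.mul ((cp11.sub cp21).pow 2)).intervalIntegrable _ _),
            intervalIntegral.integral_const_mul, intervalIntegral.integral_const_mul,
            intervalIntegral.integral_const_mul, hI0, hI1, hI2]
    -- interpolation bound
    have bound2 : I1 ≤ c / (2 * B) * I2 + B / (2 * c) * I0 := by
      have e4 : I1 = ∫ θ in (0:ℝ)..2 * π,
          -((h₁ t θ - h₂ t θ) * (P12 t θ - P22 t θ)) := by
        rw [hI1, intervalIntegral.integral_neg, step4, neg_neg]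
        apply intervalIntegral.integral_congr
        intro θ _
        ring
      rw [e4]
      calc (∫ θ in (0:ℝ)..2 * π, -((h₁ t θ - h₂ t θ) * (P12 t θ - P22 t θ)))
          ≤ ∫ θ in (0:ℝ)..2 * π,
            (c / (2 * B) * (P12 t θ - P22 t θ) ^ 2
              + B / (2 * c) * (h₁ t θ - h₂ t θ) ^ 2) := by
            apply intervalIntegral.integral_mono_on h2pi
              (((cH1.sub cH2).mul (cp12.sub cp22)).neg.intervalIntegrable _ _)
              (((continuous_const.mul ((cp12.sub cp22).pow 2)).add
                (continuous_const.mul ((cH1.sub cH2).pow 2))).intervalIntegrable _ _)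
            intro θ _
            have key : -((h₁ t θ - h₂ t θ) * (P12 t θ - P22 t θ)) * (2 * B * c)
                ≤ (c / (2 * B) * (P12 t θ - P22 t θ) ^ 2
                  + B / (2 * c) * (h₁ t θ - h₂ t θ) ^ 2) * (2 * B * c) := by
              have expand : (c / (2 * B) * (P12 t θ - P22 t θ) ^ 2
                  + B / (2 * c) * (h₁ t θ - h₂ t θ) ^ 2) * (2 * B * c)
                  = c ^ 2 * (P12 t θ - P22 t θ) ^ 2
                    + B ^ 2 * (h₁ t θ - h₂ t θ) ^ 2 := by
                field_simp
              rw [expand]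
              nlinarith only [sq_nonneg (B * (h₁ t θ - h₂ t θ) + c * (P12 t θ - P22 t θ))]
            have hpos : (0:ℝ) < 2 * B * c := by positivity
            exact le_of_mul_le_mul_right key hpos
        _ = c / (2 * B) * I2 + B / (2 * c) * I0 := by
          rw [intervalIntegral.integral_add
              (f := fun θ => c / (2 * B) * (P12 t θ - P22 t θ) ^ 2)
              (g := fun θ => B / (2 * c) * (h₁ t θ - h₂ t θ) ^ 2)
              ((continuous_const.mul ((cp12.sub cp22).pow 2)).intervalIntegrable _ _)
              ((continuous_const.mul ((cH1.sub cH2).pow 2)).intervalIntegrable _ _),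
            intervalIntegral.integral_const_mul, intervalIntegral.integral_const_mul,
            hI0, hI2]
    -- combine
    have hEt : E t = I0 := by rw [hE, hI0]
    have hBmul : B * I1 ≤ c / 2 * I2 + L * I0 := by
      have h5 := mul_le_mul_of_nonneg_left bound2 hBpos.le
      have hBP : B * (c / (2 * B)) = c / 2 := by
        field_simp
      have hBQ : B * (B / (2 * c)) = L := by rw [hL]; ring
      calc B * I1 ≤ B * (c / (2 * B) * I2 + B / (2 * c) * I0) := h5
        _ = B * (c / (2 * B)) * I2 + B * (B / (2 * c)) * I0 := by ring
        _ = c / 2 * I2 + L * I0 := by rw [hBP, hBQ]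
    rw [hEt, hKL]
    have final : ∀ e m b l i0 i1 i2 cc : ℝ, e ≤ m * i0 + b * i1 - cc * i2 →
        b * i1 ≤ cc / 2 * i2 + l * i0 → 0 ≤ cc * i2 → e ≤ (m + l) * i0 := by
      intro e m b l i0 i1 i2 cc q1 q2 q3
      nlinarith [q1, q2, q3]
    exact final (E' t) M B L I0 I1 I2 c bound1 hBmul (mul_nonneg hcpos.le hI2nn)
  -- initial energy is zero, energy is nonneg
  have hE0 : E 0 = 0 := by
    rw [hE]
    have hzero : (fun θ => (h₁ 0 θ - h₂ 0 θ) ^ 2) = fun _ : ℝ => (0:ℝ) := by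
      funext θ
      rw [hinit θ]
      ring
    simp only [hzero]
    simp
  have hEnn : ∀ s, 0 ≤ E s := by
    intro s
    rw [hE]
    exact intervalIntegral.integral_nonneg Real.two_pi_pos.le (fun u _ => sq_nonneg _)
  -- weighted energy is antitone
  set g : ℝ → ℝ := fun s => E s * Real.exp (-K * s) with hg
  have hgd : ∀ s, HasDerivAt g ((E' s - K * E s) * Real.exp (-K * s)) s := by
    intro s
    have h1 : HasDerivAt (fun y : ℝ => -K * y) (-K) s := by
      simpa using (hasDerivAt_id s).const_mul (-K)
    have hexp := h1.exp
    have hmul := (hEderiv s).mul hexp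
    rw [hg]
    refine hmul.congr_deriv ?_
    ring
  have hganti : AntitoneOn g (Set.Icc 0 T) := by
    apply antitoneOn_of_deriv_nonpos (convex_Icc 0 T)
    · exact fun x _ => (hgd x).continuousAt.continuousWithinAt
    · exact fun x _ => (hgd x).differentiableAt.differentiableWithinAt
    · intro x hx
      rw [interior_Icc] at hx
      rw [(hgd x).deriv]
      have hb := hEbound x (Set.Ioo_subset_Icc_self hx)
      have hd : E' x - K * E x ≤ 0 := by linarith
      nlinarith only [hd, (Real.exp_pos (-K * x)).le]
  -- energy vanishes on [0, T]
  have hEzero : ∀ t ∈ Set.Icc (0:ℝ) T, E t = 0 := by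
    intro t ht
    have h0T : (0:ℝ) ∈ Set.Icc (0:ℝ) T := ⟨le_refl 0, hT.le⟩
    have hmono := hganti h0T ht ht.1
    have hg0 : g 0 = 0 := by
      rw [hg]
      simp [hE0]
    rw [hg0, hg] at hmono
    have hmono' : E t * Real.exp (-K * t) ≤ 0 := hmono
    have hexp := Real.exp_pos (-K * t)
    nlinarith only [hEnn t, hexp, hmono']
  -- conclusion
  intro t ht θ
  have hEt := hEzero t ht
  rw [hE] at hEt
  have hz := zero_of_integral_sq_periodic (fun θ => h₁ t θ - h₂ t θ)
    ((continuous_slice2 hsm₁.continuous t).sub (continuous_slice2 hsm₂.continuous t))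
    ((per1 t).sub (per2 t)) hEt θ
  linarith [hz]
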